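/- (Generating-function identity underlying Theorem 2.1) For λ ∈ ℝ, r a nonnegative integer, and k a nonnegative integer, the following formal power series identity holds: (1/k!)((1+λt)^{1/λ} − 1)^k (1+λt)^{r/λ} = Σ_{n=k}^∞ ( Σ_{l=k}^{n} Σ_{m=0}^{n−l} C(n,l) r^m λ^{n−m−l} S_1(n−l, m) S_{2,λ}(l, k) ) t^n/n!. -/

import Mathlib

open Finset

/-- The degenerate falling factorial `(x|λ)_n = x(x-λ)(x-2λ)⋯(x-(n-1)λ)`. -/
noncomputable def degFall (x lam : ℝ) (n : ℕ) : ℝ := ∏ i ∈ Finset.range n, (x - i * lam)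

/-- The formal power series `(1+λt)^{y/λ} = Σ_{m=0}^∞ (y|λ)_m t^m/m!`. -/
noncomputable def degExp (lam y : ℝ) : PowerSeries ℝ :=
  PowerSeries.mk fun m => degFall y lam m / m.factorial

/-- The degenerate Stirling numbers of the second kind `S_{2,λ}(n,k)`, defined by
`(1/k!)((1+λt)^{1/λ} - 1)^k = Σ_{n=k}^∞ S_{2,λ}(n,k) t^n/n!`. -/
noncomputable def degStirling2 (lam : ℝ) (n k : ℕ) : ℝ :=
  (n.factorial : ℝ) *
    PowerSeries.coeff n (((k.factorial : ℝ))⁻¹ • (degExp lam 1 - 1) ^ k)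

/-- The extended degenerate Stirling numbers of the second kind `S_{2,r}(n+r,k+r|λ)`,
defined by `(1/k!)(1+λt)^{r/λ}((1+λt)^{1/λ} - 1)^k = Σ_{n=k}^∞ S_{2,r}(n+r,k+r|λ) t^n/n!`. -/
noncomputable def extDegStirling2 (lam : ℝ) (r n k : ℕ) : ℝ :=
  (n.factorial : ℝ) *
    PowerSeries.coeff n
      (((k.factorial : ℝ))⁻¹ • (degExp lam r * (degExp lam 1 - 1) ^ k))

/-- The exponential `e^f = Σ_{k=0}^∞ f^k / k!` of a formal power series, computed
coefficientwise (the coefficientwise sums converge when `f` has zero constant term). -/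
noncomputable def expComp (f : PowerSeries ℝ) : PowerSeries ℝ :=
  PowerSeries.mk fun n => ∑' k : ℕ, PowerSeries.coeff n (f ^ k) / k.factorial

/-- The degenerate Bell polynomials, defined by
`e^{x((1+λt)^{1/λ} - 1)} = Σ_{n=0}^∞ Bel_{n,λ}(x) t^n/n!`. -/
noncomputable def degBell (lam x : ℝ) (n : ℕ) : ℝ :=
  (n.factorial : ℝ) * PowerSeries.coeff n (expComp (x • (degExp lam 1 - 1)))

/-- The extended degenerate Bell polynomials, defined by
`(1+λt)^{r/λ} e^{x((1+λt)^{1/λ} - 1)} = Σ_{n=0}^∞ Bel^{(r)}_{n,λ}(x) t^n/n!`. -/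
noncomputable def extDegBell (lam : ℝ) (r : ℕ) (x : ℝ) (n : ℕ) : ℝ :=
  (n.factorial : ℝ) *
    PowerSeries.coeff n (degExp lam r * expComp (x • (degExp lam 1 - 1)))

/-- The signed Stirling numbers of the first kind `S_1(n,k)`, defined by
`(x)_n = x(x-1)⋯(x-n+1) = Σ_{k=0}^n S_1(n,k) x^k`. -/
noncomputable def stirling1 (n k : ℕ) : ℝ :=
  (∏ i ∈ Finset.range n, (Polynomial.X - Polynomial.C (i : ℝ))).coeff k

/-- The Stirling numbers of the second kind, defined by
`(1/k!)(e^t - 1)^k = Σ_{n=k}^∞ S_2(n,k) t^n/n!`. -/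
noncomputable def stirling2 (n k : ℕ) : ℝ :=
  (n.factorial : ℝ) *
    PowerSeries.coeff n (((k.factorial : ℝ))⁻¹ • (PowerSeries.exp ℝ - 1) ^ k)

/-- The r-Stirling numbers of the second kind `S_{2,r}(n+r,k+r)`, defined by
`e^{rt}(1/k!)(e^t - 1)^k = Σ_{n=0}^∞ S_{2,r}(n+r,k+r) t^n/n!`. -/
noncomputable def rStirling2 (r n k : ℕ) : ℝ :=
  (n.factorial : ℝ) *
    PowerSeries.coeff n
      (PowerSeries.rescale (r : ℝ) (PowerSeries.exp ℝ) *
        ((k.factorial : ℝ))⁻¹ • (PowerSeries.exp ℝ - 1) ^ k)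

/-- The ordinary falling factorial `(x)_k = x(x-1)⋯(x-k+1)`. -/
noncomputable def fallFact (x : ℝ) (k : ℕ) : ℝ := ∏ i ∈ Finset.range k, (x - i)

/-!
Multiply exponential generating functions: the `n`-th coefficient of the product of
`(1/k!)((1+λt)^{1/λ} - 1)^k` and `(1+λt)^{r/λ}` is the binomial convolution of `S_{2,λ}(l,k)` and
`(r|λ)_{n-l}`. The latter expands as `(r|λ)_j = Σ_m S_1(j,m) r^m λ^{j-m}`, which for `λ ≠ 0` is the
homogeneity `(x|λ)_j = λ^j (x/λ)_j` and for `λ = 0` reduces to `S_1(j,j) = 1`.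
-/

section

open Polynomial

lemma monic_prod_range_X_sub_natCast (j : ℕ) : (∏ i ∈ range j, (X - C (i : ℝ))).Monic :=
  monic_prod_of_monic _ _ fun _ _ => monic_X_sub_C _

lemma natDegree_prod_range_X_sub_natCast (j : ℕ) :
    (∏ i ∈ range j, (X - C (i : ℝ))).natDegree = j := by
  rw [natDegree_prod_of_monic _ _ fun _ _ => monic_X_sub_C _]
  simp only [natDegree_X_sub_C, sum_const, card_range, smul_eq_mul, mul_one]

lemma stirling1_self (j : ℕ) : stirling1 j j = 1 := by
  have := monic_prod_range_X_sub_natCast j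
  rwa [Monic, leadingCoeff, natDegree_prod_range_X_sub_natCast] at this

lemma degFall_zero_right (x : ℝ) (j : ℕ) : degFall x 0 j = x ^ j := by
  simp [degFall]

lemma degFall_eq_pow_mul_eval {lam : ℝ} (hlam : lam ≠ 0) (x : ℝ) (j : ℕ) :
    degFall x lam j = lam ^ j * (∏ i ∈ range j, (X - C (i : ℝ))).eval (x / lam) := by
  rw [eval_prod, ← card_range j, ← prod_const, card_range, ← prod_mul_distrib]
  refine prod_congr rfl fun i _ => ?_
  simp only [eval_sub, eval_X, eval_C]
  field_simp

end

lemma degFall_eq_sum_stirling1 (x lam : ℝ) (j : ℕ) :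
    degFall x lam j = ∑ m ∈ range (j + 1), stirling1 j m * x ^ m * lam ^ (j - m) := by
  rcases eq_or_ne lam 0 with rfl | hlam
  · rw [degFall_zero_right, sum_eq_single_of_mem j (self_mem_range_succ j)]
    · simp [stirling1_self]
    · intro m hm hmj
      have : j - m ≠ 0 := by simp at hm; omega
      simp [this]
  · rw [degFall_eq_pow_mul_eval hlam, Polynomial.eval_eq_sum_range,
      natDegree_prod_range_X_sub_natCast, mul_sum]
    refine sum_congr rfl fun m hm => ?_
    rw [← pow_sub_mul_pow lam (Nat.le_of_lt_succ (mem_range.mp hm)), stirling1, div_pow]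
    field_simp

lemma factorial_mul_coeff_degExp (lam y : ℝ) (j : ℕ) :
    (j.factorial : ℝ) * PowerSeries.coeff j (degExp lam y) = degFall y lam j := by
  rw [degExp, PowerSeries.coeff_mk, mul_div_cancel₀ _ (Nat.cast_ne_zero.mpr j.factorial_ne_zero)]

lemma coeff_degExp_sub_one_pow_of_lt (lam : ℝ) {k l : ℕ} (hl : l < k) :
    PowerSeries.coeff l ((degExp lam 1 - 1) ^ k) = 0 := by
  have hc : PowerSeries.constantCoeff (degExp lam 1 - 1) = 0 := by
    simp [degExp, degFall, PowerSeries.constantCoeff_mk]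
  exact PowerSeries.X_pow_dvd_iff.mp (pow_dvd_pow_of_dvd (PowerSeries.X_dvd_iff.mpr hc) k) l hl

lemma degStirling2_of_lt (lam : ℝ) {l k : ℕ} (hl : l < k) : degStirling2 lam l k = 0 := by
  simp [degStirling2, coeff_degExp_sub_one_pow_of_lt lam hl]

lemma factorial_mul_coeff_mul {R : Type*} [CommSemiring R] (f g : PowerSeries R) (n : ℕ) :
    (n.factorial : R) * PowerSeries.coeff n (f * g) =
      ∑ l ∈ range (n + 1), (n.choose l : R) * ((l.factorial : R) * PowerSeries.coeff l f) *
        (((n - l).factorial : R) * PowerSeries.coeff (n - l) g) := by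
  rw [PowerSeries.coeff_mul, Nat.sum_antidiagonal_eq_sum_range_succ_mk, mul_sum]
  refine sum_congr rfl fun l hl => ?_
  have := Nat.choose_mul_factorial_mul_factorial (Nat.le_of_lt_succ (mem_range.mp hl))
  rw [← this]
  push_cast
  ring

theorem genFun_extDegStirling2 (lam : ℝ) (r k : ℕ) :
    ((k.factorial : ℝ))⁻¹ • ((degExp lam 1 - 1) ^ k * degExp lam r) =
      PowerSeries.mk fun n =>
        (∑ l ∈ Finset.Icc k n, ∑ m ∈ Finset.range (n - l + 1),
          (n.choose l : ℝ) * (r : ℝ) ^ m * lam ^ (n - m - l) * stirling1 (n - l) m *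
            degStirling2 lam l k) / (n.factorial : ℝ) := by
  ext n
  rw [PowerSeries.coeff_mk, eq_div_iff (Nat.cast_ne_zero.mpr n.factorial_ne_zero), mul_comm,
    ← smul_mul_assoc, factorial_mul_coeff_mul]
  have hIcc : Icc k n ⊆ range (n + 1) := fun l hl =>
    mem_range.mpr (Nat.lt_succ_of_le (mem_Icc.mp hl).2)
  rw [← sum_subset hIcc fun l hln hl => ?vanish]
  case vanish =>
    have hlk : l < k := by simp only [mem_Icc, mem_range] at hln hl; omega
    rw [← degStirling2, degStirling2_of_lt lam hlk, mul_zero, zero_mul]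
  refine sum_congr rfl fun l _ => ?_
  rw [← degStirling2, factorial_mul_coeff_degExp, degFall_eq_sum_stirling1, mul_sum]
  refine sum_congr rfl fun m _ => ?_
  rw [show n - l - m = n - m - l by omega]
  ring
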